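/- Let n > d be positive integers, m > 1 an integer, and let A be a d × n integer matrix with first row (a₁₁, m·a₁₂, …, m·a₁ₙ) and i-th row (a_{i1}, …, a_{in}) for 2 ≤ i ≤ d, satisfying gcd(a₁₁, m) = 1, such that both A and the matrix with first row (1, a₁₂, …, a₁ₙ), first column below equal to 0, and remaining entries a_{ij}, determine surjections ℤⁿ → ℤ^d. Let B be an n × (n−d) integer matrix with first row (m·b₁₁, m·b₁₂, …, m·b_{1,n−d}) and i-th row (b_{i1}, …, b_{i,n−d}) for 2 ≤ i ≤ n, such that the sequence 0 → ℤ^{n−d} →B ℤⁿ →A ℤ^d → 0 is exact. Let A′ be the (d+m−1) × (n+m−1) matrix with row 1 = (a₁₁, 0, …, 0, a₁₂, …, a₁ₙ), rows i = (a_{i1} repeated m times, a_{i2}, …, a_{in}) for 2 ≤ i ≤ d, and rows d+k (1 ≤ k ≤ m−1) having 1 in column k, −1 in column k+1, and 0 elsewhere. Let B′ be the (n+m−1) × (n−d) matrix whose first m rows all equal (b₁₁, b₁₂, …, b_{1,n−d}) and whose remaining rows are rows 2 through n of B. Then the sequence 0 → ℤ^{n−d} →B′ ℤ^{n+m−1}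 →A′ ℤ^{d+m−1} → 0 is exact. -/

import Mathlib

/-!
The last `m - 1` rows of `A'` say `x₀ = x₁ = ⋯ = x_{m-1}`, so every vector of its kernel is
`x ∘ collapseHead m` for some `x : ℤⁿ`, i.e. `x₀` repeated `m` times followed by `x₁, …, x_{n-1}`.
On such vectors the first `d` rows of `A'` act as the matrix `C` obtained from `a` by multiplying
its first column below the corner by `m`. With `D = diag(m, 1, …, 1)` one has `A D = D C`, so
`C x = 0` iff `D x ∈ ker A = im B`; as `B = D B₁`, where `B₁` is `B` with first row `b₁`, this says
`x ∈ im B₁`, i.e. `x ∘ collapseHead m ∈ im B'`.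

For surjectivity, `C` differs from the surjective matrix `A₁` only in column `0`, by a vector which
`C diag(1, m, …, m) = diag(1, m, …, m) A` and the surjectivity of `A` put in the image of `C`; so `C`
is onto, and the indicator vectors of the first `k` columns reach the last `m - 1` rows of `A'`.
-/

open Matrix Finset Function

section

variable {R : Type*} [CommRing R] {d n : ℕ}

def scaleFirstRowTail (c : R) (a : Matrix (Fin d) (Fin n) R) : Matrix (Fin d) (Fin n) R :=
  of fun i j => if (i : ℕ) = 0 ∧ (j : ℕ) ≠ 0 then c * a i j else a i j

def scaleFirstColTail (c : R) (a : Matrix (Fin d) (Fin n) R) : Matrix (Fin d) (Fin n) R :=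
  of fun i j => if (i : ℕ) ≠ 0 ∧ (j : ℕ) = 0 then c * a i j else a i j

def tailScale (c : R) (k : ℕ) : Fin k → R := fun j => if (j : ℕ) = 0 then 1 else c

def headScale (c : R) (k : ℕ) : Fin k → R := fun j => if (j : ℕ) = 0 then c else 1

theorem scaleFirstColTail_mul_diagonal_tailScale (c : R) (a : Matrix (Fin d) (Fin n) R) :
    scaleFirstColTail c a * diagonal (tailScale c n) =
      diagonal (tailScale c d) * scaleFirstRowTail c a := by
  ext i j
  rw [mul_diagonal, diagonal_mul]
  simp only [scaleFirstColTail, scaleFirstRowTail, tailScale, of_apply]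
  split_ifs <;> first | omega | ring

theorem scaleFirstRowTail_mul_diagonal_headScale (c : R) (a : Matrix (Fin d) (Fin n) R) :
    scaleFirstRowTail c a * diagonal (headScale c n) =
      diagonal (headScale c d) * scaleFirstColTail c a := by
  ext i j
  rw [mul_diagonal, diagonal_mul]
  simp only [scaleFirstColTail, scaleFirstRowTail, headScale, of_apply]
  split_ifs <;> first | omega | ring

theorem surjective_scaleFirstColTail [NeZero n] {c : R} {a : Matrix (Fin d) (Fin n) R}
    (hA : Surjective (scaleFirstRowTail c a).mulVec)
    (hA₁ : Surjective (of fun (i : Fin d) (j : Fin n) =>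
      if (j : ℕ) = 0 then (if (i : ℕ) = 0 then 1 else 0) else a i j).mulVec) :
    Surjective (scaleFirstColTail c a).mulVec := by
  set A₁ : Matrix (Fin d) (Fin n) R :=
    of fun i j => if (j : ℕ) = 0 then (if (i : ℕ) = 0 then 1 else 0) else a i j
  intro z
  obtain ⟨x₁, rfl⟩ := hA₁ z
  obtain ⟨x₀, hx₀⟩ := hA fun i => a i 0 - if (i : ℕ) = 0 then 1 else 0
  -- the two matrices differ only in column `0`, by a vector in the image of `scaleFirstColTail c a`
  set v := diagonal (tailScale c d) *ᵥ (scaleFirstRowTail c a *ᵥ x₀)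
  have hsplit : scaleFirstColTail c a = A₁ + vecMulVec v (Pi.single 0 1) := by
    ext i j
    obtain rfl | hj := eq_or_ne j 0
    · simp only [v, hx₀, A₁, scaleFirstColTail, tailScale, Matrix.add_apply, vecMulVec_apply,
        mulVec_diagonal, of_apply, Pi.single_eq_same, Fin.val_zero, and_true, ne_eq]
      split_ifs <;> first | omega | ring
    · simp [A₁, scaleFirstColTail, vecMulVec_apply, hj]
  refine ⟨x₁ - x₁ 0 • (diagonal (tailScale c n) *ᵥ x₀), ?_⟩
  rw [mulVec_sub, mulVec_smul, mulVec_mulVec, scaleFirstColTail_mul_diagonal_tailScale,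
    ← mulVec_mulVec, hsplit, add_mulVec, vecMulVec_mulVec, single_one_dotProduct]
  simp [v]

theorem injective_diagonal_headScale_mulVec [IsDomain R] {c : R} (hc : c ≠ 0) (k : ℕ) :
    Injective (diagonal (headScale c k)).mulVec := fun y z h => funext fun i => by
  have := congrFun h i
  simp only [mulVec_diagonal, headScale] at this
  split_ifs at this
  · exact mul_left_cancel₀ hc this
  · simpa using this

theorem mulVec_comp_apply_eq_sum_fiberwise {ι κ κ' : Type*} [Fintype κ] [Fintype κ']
    [DecidableEq κ'] (M : Matrix ι κ R) (π : κ → κ') (x : κ' → R) (i : ι) :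
    (M *ᵥ (x ∘ π)) i = ∑ j, (∑ l with π l = j, M i l) * x j := by
  simp only [mulVec, dotProduct, Finset.sum_mul]
  rw [← Finset.sum_fiberwise univ π]
  refine sum_congr rfl fun j _ => sum_congr rfl fun l hl => ?_
  rw [Function.comp_apply, (mem_filter.1 hl).2]

variable (m : ℕ) [NeZero n]

-- truncated subtraction sends all of the first `m` columns of `A'` to column `0`
def collapseHead (l : Fin (n + m - 1)) : Fin n :=
  ⟨l + 1 - m, by have := l.isLt; have := NeZero.pos n; omega⟩

@[simp]
theorem val_collapseHead (l : Fin (n + m - 1)) :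
    (collapseHead m l : ℕ) = l + 1 - m :=
  rfl

theorem collapseHead_surjective (hm : 0 < m) : Surjective (collapseHead (n := n) m) :=
  fun j => ⟨⟨j + m - 1, by omega⟩, Fin.ext (by simp only [val_collapseHead]; omega)⟩

-- the matrix `A'`, for which `A = scaleFirstRowTail m a`
def enlarge (a : Matrix (Fin d) (Fin n) R) :
    Matrix (Fin (d + m - 1)) (Fin (n + m - 1)) R :=
  of fun i l =>
    if hi : (i : ℕ) < d then
      if (i : ℕ) = 0 ∧ (l : ℕ) ≠ 0 ∧ (l : ℕ) < m then 0 else a ⟨i, hi⟩ (collapseHead m l)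
    else if (l : ℕ) = i - d then 1 else if (l : ℕ) = i - d + 1 then -1 else 0

theorem enlarge_mulVec_of_le (a : Matrix (Fin d) (Fin n) R) (v : Fin (n + m - 1) → R)
    (i : Fin (d + m - 1)) (hi : d ≤ i) :
    (enlarge m a *ᵥ v) i =
      v ⟨i - d, by have := NeZero.pos n; omega⟩ -
        v ⟨i - d + 1, by have := NeZero.pos n; omega⟩ := by
  have hrow : enlarge m a i = Pi.single ⟨i - d, by have := NeZero.pos n; omega⟩ 1 -
      Pi.single ⟨i - d + 1, by have := NeZero.pos n; omega⟩ 1 := by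
    ext l
    simp only [enlarge, of_apply, Pi.sub_apply, Pi.single_apply, Fin.ext_iff, dif_neg (not_lt.2 hi)]
    split_ifs <;> first | omega | simp
  simp only [mulVec, hrow, sub_dotProduct, single_dotProduct, one_mul]

theorem sum_enlarge_fiber (hm : 0 < m) (a : Matrix (Fin d) (Fin n) R) (i : Fin (d + m - 1))
    (hi : (i : ℕ) < d) (j : Fin n) :
    ∑ l with collapseHead m l = j, enlarge m a i l = scaleFirstColTail (m : R) a ⟨i, hi⟩ j := by
  have hn := NeZero.pos n
  have hmem : ∀ l, l ∈ ({l | collapseHead m l = j} : Finset _) ↔ (l : ℕ) + 1 - m = j := by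
    simp only [mem_filter, mem_univ, true_and, Fin.ext_iff, val_collapseHead, implies_true]
  have hfiber : ∀ l ∈ ({l | collapseHead m l = j} : Finset _), enlarge m a i l =
      if (i : ℕ) = 0 ∧ (l : ℕ) ≠ 0 ∧ (l : ℕ) < m then 0 else a ⟨i, hi⟩ j := by
    intro l hl
    rw [(mem_filter.1 hl).2.symm]
    simp only [enlarge, of_apply, dif_pos hi]
  rw [sum_congr rfl hfiber]
  simp only [scaleFirstColTail, of_apply]
  by_cases hj : (j : ℕ) = 0
  · by_cases hi0 : (i : ℕ) = 0
    · rw [sum_eq_single_of_mem ⟨0, by omega⟩ ((hmem _).2 (by simp only; omega))]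
      · simp [hi0]
      · intro l hl hl0
        rw [if_pos ⟨hi0, Fin.val_ne_iff.2 hl0, by have := (hmem l).1 hl; omega⟩]
    · have hcard : #({l | collapseHead m l = j} : Finset (Fin (n + m - 1))) = m := by
        rw [filter_congr (q := fun l : Fin (n + m - 1) => (l : ℕ) < m) fun l _ => by
          rw [Fin.ext_iff, val_collapseHead, hj]; omega, Fin.card_filter_val_lt]
        omega
      simp [hi0, hj, hcard]
  · rw [sum_eq_single_of_mem ⟨j + m - 1, by omega⟩ ((hmem _).2 (by simp only; omega))]
    · rw [if_neg (by simp only; omega), if_neg (by omega)]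
    · intro l hl hlj
      exact absurd (Fin.ext (show (l : ℕ) = j + m - 1 by have := (hmem l).1 hl; omega)) hlj

theorem enlarge_mulVec_comp_collapseHead (hm : 0 < m) (a : Matrix (Fin d) (Fin n) R)
    (x : Fin n → R) :
    enlarge m a *ᵥ (x ∘ collapseHead m) =
      fun i : Fin (d + m - 1) =>
        if hi : (i : ℕ) < d then (scaleFirstColTail (m : R) a *ᵥ x) ⟨i, hi⟩ else 0 := by
  ext i
  split_ifs with hi
  · rw [mulVec_comp_apply_eq_sum_fiberwise]
    exact sum_congr rfl fun j _ => by rw [sum_enlarge_fiber m hm a i hi j]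
  · rw [enlarge_mulVec_of_le m a _ i (not_lt.1 hi)]
    simp only [Function.comp_apply, sub_eq_zero]
    congr 1
    ext
    simp only [val_collapseHead]
    omega

theorem eq_comp_collapseHead_of_enlarge_mulVec (hm : 0 < m) (a : Matrix (Fin d) (Fin n) R)
    (v : Fin (n + m - 1) → R) (hv : ∀ i : Fin (d + m - 1), d ≤ i → (enlarge m a *ᵥ v) i = 0) :
    v = (fun j : Fin n => v ⟨j + m - 1, by omega⟩) ∘ collapseHead m := by
  have hn := NeZero.pos n
  have hstep : ∀ k (hk : k + 1 < m), v ⟨k, by omega⟩ = v ⟨k + 1, by omega⟩ := fun k hk => by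
    have := hv ⟨d + k, by omega⟩ (Nat.le_add_right d k)
    rw [enlarge_mulVec_of_le m a v _ (Nat.le_add_right d k), sub_eq_zero] at this
    simpa using this
  have hconst : ∀ j k (hk : k + j = m - 1), v ⟨k, by omega⟩ = v ⟨m - 1, by omega⟩ := by
    intro j
    induction j with
    | zero => intro k hk; simp only [add_zero] at hk; simp only [hk]
    | succ j ih => intro k hk; rw [hstep k (by omega), ih (k + 1) (by omega)]
  funext l
  simp only [Function.comp_apply, val_collapseHead]
  by_cases hl : (l : ℕ) < m
  · exact (hconst (m - 1 - l) l (by omega)).trans (congrArg v (Fin.ext (by simp only; omega)))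
  · congr 1
    ext
    simp only
    omega

theorem enlarge_mulVec_comp_eq_zero_iff [IsDomain R] [CharZero R] (hm : 0 < m)
    (a : Matrix (Fin d) (Fin n) R) (x : Fin n → R) :
    enlarge m a *ᵥ (x ∘ collapseHead m) = 0 ↔
      scaleFirstRowTail (m : R) a *ᵥ (diagonal (headScale (m : R) n) *ᵥ x) = 0 := by
  rw [mulVec_mulVec, scaleFirstRowTail_mul_diagonal_headScale, ← mulVec_mulVec,
    (injective_diagonal_headScale_mulVec (Nat.cast_ne_zero.2 hm.ne') d).eq_iff' (mulVec_zero _),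
    enlarge_mulVec_comp_collapseHead m hm]
  constructor
  · intro h
    funext i
    simpa [i.isLt] using congrFun h ⟨i, by omega⟩
  · intro h
    funext i
    simp [h]

theorem surjective_enlarge (hm : 0 < m) {a : Matrix (Fin d) (Fin n) R}
    (hC : Surjective (scaleFirstColTail (m : R) a).mulVec) :
    Surjective (enlarge m a).mulVec := by
  have htop : ∀ y : Fin (d + m - 1) → R, (∀ i : Fin (d + m - 1), d ≤ i → y i = 0) →
      y ∈ LinearMap.range (enlarge m a).mulVecLin := by
    intro y hy
    obtain ⟨x, hx⟩ := hC fun i => y ⟨i, by omega⟩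
    refine ⟨x ∘ collapseHead m, ?_⟩
    rw [mulVecLin_apply, enlarge_mulVec_comp_collapseHead m hm, hx]
    funext i
    split_ifs with hi
    · rfl
    · exact (hy i (not_lt.1 hi)).symm
  suffices h : LinearMap.range (enlarge m a).mulVecLin = ⊤ by
    rw [← coe_mulVecLin]
    exact LinearMap.range_eq_top.1 h
  rw [eq_top_iff, ← (Pi.basisFun R _).span_eq, Submodule.span_le, Set.range_subset_iff]
  intro i
  rw [Pi.basisFun_apply, SetLike.mem_coe]
  by_cases hi : (i : ℕ) < d
  · exact htop _ fun i' hi' => Pi.single_eq_of_ne (fun h => by rw [h] at hi'; omega) _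
  -- the indicator of the first `i - d + 1` columns is sent to `Pi.single i 1` plus a top part
  set w : Fin (n + m - 1) → R := fun l => if (l : ℕ) ≤ i - d then 1 else 0
  rw [← sub_sub_cancel (enlarge m a *ᵥ w) (Pi.single i 1)]
  refine sub_mem ⟨w, rfl⟩ (htop _ fun i' hi' => ?_)
  rw [Pi.sub_apply, enlarge_mulVec_of_le m a w i' hi', Pi.single_apply]
  simp only [w, Fin.ext_iff]
  split_ifs <;> first | omega | simp

theorem injective_mulVec_submatrix_collapseHead (hm : 0 < m) {κ : Type*} [Fintype κ]
    {D : Matrix (Fin n) (Fin n) R} {B : Matrix (Fin n) κ R} (hB : Injective (D * B).mulVec) :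
    Injective (B.submatrix (collapseHead m) id).mulVec := by
  intro u₁ u₂ h
  apply hB
  rw [← mulVec_mulVec, ← mulVec_mulVec]
  exact congrArg _ ((collapseHead_surjective m hm).injective_comp_right h)

theorem diagonal_headScale_mul_updateRow {κ : Type*} {c : R} {B : Matrix (Fin n) κ R}
    {b : κ → R} (hB : ∀ j, B 0 j = c * b j) :
    diagonal (headScale c n) * B.updateRow 0 b = B := by
  ext i j
  rw [diagonal_mul, updateRow_apply]
  obtain rfl | hi := eq_or_ne i 0
  · simp [headScale, hB]
  · simp [headScale, hi]

theorem enlarge_mulVec_eq_zero_iff [IsDomain R] [CharZero R] (hm : 0 < m) {κ : Type*} [Fintype κ]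
    {a : Matrix (Fin d) (Fin n) R} {B : Matrix (Fin n) κ R}
    (hexact : ∀ x, scaleFirstRowTail (m : R) a *ᵥ x = 0 ↔
      ∃ u, (diagonal (headScale (m : R) n) * B) *ᵥ u = x)
    (v : Fin (n + m - 1) → R) :
    enlarge m a *ᵥ v = 0 ↔ ∃ u, B.submatrix (collapseHead m) id *ᵥ u = v := by
  have hB : ∀ u, B.submatrix (collapseHead m) id *ᵥ u = (B *ᵥ u) ∘ collapseHead m := fun _ => rfl
  constructor
  · intro hv
    obtain ⟨x, rfl⟩ : ∃ x, v = x ∘ collapseHead m :=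
      ⟨_, eq_comp_collapseHead_of_enlarge_mulVec m hm a v fun i _ => congrFun hv i⟩
    obtain ⟨u, hu⟩ := (hexact _).1 ((enlarge_mulVec_comp_eq_zero_iff m hm a x).1 hv)
    refine ⟨u, (hB u).trans (congrArg (· ∘ collapseHead m) ?_)⟩
    apply injective_diagonal_headScale_mulVec (Nat.cast_ne_zero.2 hm.ne') n
    rwa [mulVec_mulVec]
  · rintro ⟨u, rfl⟩
    rw [hB, enlarge_mulVec_comp_eq_zero_iff m hm, mulVec_mulVec u]
    exact (hexact _).2 ⟨u, rfl⟩

end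

/-- **Lemma 7.** With `A`, `A'` the matrices of Lemma 6 and `B`, `B'` the corresponding
enlarged kernel matrices (the non-primitive first row `m·(b₁₁,…,b₁,ₙ₋d)` of `B` being broken
into `m` copies of `(b₁₁,…,b₁,ₙ₋d)` in `B'`), exactness of
`0 → ℤ^{n-d} →B ℤⁿ →A ℤ^d → 0` implies exactness of
`0 → ℤ^{n-d} →B' ℤ^{n+m-1} →A' ℤ^{d+m-1} → 0`. -/
theorem stmt_9 (d n m : ℕ) (hd : 0 < d) (hdn : d < n) (hm : 1 < m)
    (a : Matrix (Fin d) (Fin n) ℤ)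
    (A : Matrix (Fin d) (Fin n) ℤ)
    (hA : ∀ (i : Fin d) (j : Fin n),
      A i j = if (i : ℕ) = 0 ∧ (j : ℕ) ≠ 0 then (m : ℤ) * a i j else a i j)
    (hAsurj : Function.Surjective A.mulVec)
    (hA1surj : Function.Surjective (Matrix.mulVec (fun (i : Fin d) (j : Fin n) =>
      if (j : ℕ) = 0 then (if (i : ℕ) = 0 then 1 else 0) else a i j)))
    (b₁ : Fin (n - d) → ℤ)
    (B : Matrix (Fin n) (Fin (n - d)) ℤ)
    (hB0 : ∀ j : Fin (n - d), B ⟨0, by omega⟩ j = (m : ℤ) * b₁ j)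
    (hBinj : Function.Injective B.mulVec)
    (hexact : ∀ v : Fin n → ℤ, A.mulVec v = 0 ↔ ∃ u, B.mulVec u = v)
    (A' : Matrix (Fin (d + m - 1)) (Fin (n + m - 1)) ℤ)
    (hA' : ∀ (i : Fin (d + m - 1)) (j : Fin (n + m - 1)),
      A' i j =
        if hi : (i : ℕ) < d then
          if (j : ℕ) < m then
            (if (i : ℕ) = 0 then
              (if (j : ℕ) = 0 then a ⟨(i : ℕ), hi⟩ ⟨0, by omega⟩ else 0)
            else a ⟨(i : ℕ), hi⟩ ⟨0, by omega⟩)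
          else a ⟨(i : ℕ), hi⟩ ⟨(j : ℕ) - m + 1, by have := j.isLt; omega⟩
        else
          if (j : ℕ) = (i : ℕ) - d then 1
          else if (j : ℕ) = (i : ℕ) - d + 1 then -1 else 0)
    (B' : Matrix (Fin (n + m - 1)) (Fin (n - d)) ℤ)
    (hB' : ∀ (i : Fin (n + m - 1)) (j : Fin (n - d)),
      B' i j = if (i : ℕ) < m then b₁ j
        else B ⟨(i : ℕ) - m + 1, by have := i.isLt; omega⟩ j) :
    Function.Injective B'.mulVec ∧ Function.Surjective A'.mulVec ∧
      ∀ v : Fin (n + m - 1) → ℤ, A'.mulVec v = 0 ↔ ∃ u, B'.mulVec u = v := by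
  have : NeZero n := ⟨by omega⟩
  have hm₀ : 0 < m := by omega
  obtain rfl : A = scaleFirstRowTail (m : ℤ) a := Matrix.ext hA
  obtain rfl : A' = enlarge m a := by
    ext i l
    rw [hA']
    simp only [enlarge, Matrix.of_apply]
    split_ifs <;> first | omega | rfl | (congr 1; ext; simp only [val_collapseHead]; omega)
  obtain rfl : B' = (B.updateRow 0 b₁).submatrix (collapseHead m) id := by
    ext l j
    have h0 : collapseHead m l = 0 ↔ (l : ℕ) < m := by
      rw [Fin.ext_iff, val_collapseHead, Fin.val_zero]; omega
    rw [hB', Matrix.submatrix_apply, Matrix.updateRow_apply]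
    by_cases hl : (l : ℕ) < m
    · rw [if_pos hl, if_pos (h0.2 hl)]; rfl
    · rw [if_neg hl, if_neg (mt h0.1 hl)]
      exact congrArg (B · j) (Fin.ext (by simp only [val_collapseHead]; omega))
  rw [← diagonal_headScale_mul_updateRow hB0] at hBinj hexact
  exact ⟨injective_mulVec_submatrix_collapseHead m hm₀ hBinj,
    surjective_enlarge m hm₀ (surjective_scaleFirstColTail hAsurj hA1surj),
    enlarge_mulVec_eq_zero_iff m hm₀ hexact⟩
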